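/- For n > m ≥ 1 let Λ_{n,m} = ∏_{j=m}^{n−1} μ_j/λ_j. Then there exists a constant C > 0, independent of K, m, n, such that for all K > 1 and all n > m ≥ 1: | log Λ_{n,m} − (1/2)·log( (μ̃(m/K)·λ̃(n/K)) / (λ̃(m/K)·μ̃(n/K)) ) − K·( H(n/K) − H(m/K) ) | ≤ C/K. Equivalently, Λ_{n,m} = √( (μ_m/λ_m)·(λ_n/μ_n) )·exp( K·(H(n/K) − H(m/K)) + c(m,n,K)/K ) with sup_{m,n,K} |c(m,n,K)| < ∞. -/

import Mathlib

/-!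
Since `log (μ_j / λ_j) = log (μ̃(j/K) / λ̃(j/K)) = H'(j/K)`, `log Λ_{n,m}` is the Riemann sum
`∑_{j=m}^{n-1} H'(j/K)` for `K (H(n/K) - H(m/K))`. The trapezoid rule on each `[j/K, (j+1)/K]`
identifies it with that integral plus the boundary term `(H'(m/K) - H'(n/K)) / 2`, which is the
`(1/2) log (…)` of the statement, up to an error `K⁻³ sup |H'''| / 2` per step. The weight
`1 + x²` in the bound on `H'''` makes these errors summable: comparing with `arctan`,
`∑_{j ≥ 1} (1 + (j/K)²)⁻¹ ≤ (π/2) K`, so the total error is `O(K⁻²)` before the factor `K`.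
-/

open Filter MeasureTheory

noncomputable section

/-- Birth rate `λ_n = n · λ̃(n/K)`. -/
def lamK (lam : ℝ → ℝ) (K : ℝ) (n : ℕ) : ℝ := (n : ℝ) * lam ((n : ℝ) / K)

/-- Death rate `μ_n = n · μ̃(n/K)`. -/
def muK (mu : ℝ → ℝ) (K : ℝ) (n : ℕ) : ℝ := (n : ℝ) * mu ((n : ℝ) / K)

/-- The weights `π_n = (λ₁⋯λ_{n-1})/(μ₁⋯μ_n)` (so `π₁ = 1/μ₁`). -/
def pik (lam mu : ℝ → ℝ) (K : ℝ) (n : ℕ) : ℝ :=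
  (∏ j ∈ Finset.Icc 1 (n - 1), lamK lam K j) / (∏ j ∈ Finset.Icc 1 n, muK mu K j)

/-- `H(x) = ∫_{x*}^x log (μ̃(s)/λ̃(s)) ds`. -/
def Hfun (lam mu : ℝ → ℝ) (xs : ℝ) (x : ℝ) : ℝ :=
  ∫ s in xs..x, Real.log (mu s / lam s)

/-- `u⁰_n = 1 + ∑_{j=1}^{n-1} 1/(λ_j π_j)`. -/
def u0 (lam mu : ℝ → ℝ) (K : ℝ) (n : ℕ) : ℝ :=
  1 + ∑ j ∈ Finset.Icc 1 (n - 1), 1 / (lamK lam K j * pik lam mu K j)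

/-- Standing assumptions on the rate functions. -/
structure SA (lam mu : ℝ → ℝ) (xs : ℝ) : Prop where
  lam_pos : ∀ x : ℝ, 0 ≤ x → 0 < lam x
  mu_pos : ∀ x : ℝ, 0 ≤ x → 0 < mu x
  lam_diff : DifferentiableOn ℝ lam (Set.Ici (0 : ℝ))
  mu_diff : DifferentiableOn ℝ mu (Set.Ici (0 : ℝ))
  lam_mono : MonotoneOn lam (Set.Ici (0 : ℝ))
  mu_mono : MonotoneOn mu (Set.Ici (0 : ℝ))
  xs_pos : 0 < xs
  lam_eq_mu_xs : lam xs = mu xs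
  xs_unique : ∀ x : ℝ, 0 < x → lam x = mu x → x = xs
  logratio_mono : MonotoneOn (fun x : ℝ => Real.log (mu x / lam x)) (Set.Ici (0 : ℝ))
  H_d1 : ∀ x : ℝ, 0 ≤ x → DifferentiableAt ℝ (Hfun lam mu xs) x
  H_d2 : ∀ x : ℝ, 0 ≤ x → DifferentiableAt ℝ (deriv (Hfun lam mu xs)) x
  H_d3 : ∀ x : ℝ, 0 ≤ x → DifferentiableAt ℝ (deriv (deriv (Hfun lam mu xs))) x
  H3_bdd : ∃ M : ℝ, ∀ x : ℝ, 0 ≤ x →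
    (1 + x ^ 2) * |deriv (deriv (deriv (Hfun lam mu xs))) x| ≤ M


open Real Set

theorem one_div_one_add_sq_mul_sub_le_arctan_sub {a b : ℝ} (ha : 0 ≤ a) (hab : a ≤ b) :
    1 / (1 + b ^ 2) * (b - a) ≤ arctan b - arctan a := by
  refine (convex_Icc a b).mul_sub_le_image_sub_of_le_deriv continuous_arctan.continuousOn
    differentiable_arctan.differentiableOn (fun x hx => ?_) a (left_mem_Icc.2 hab) b
    (right_mem_Icc.2 hab) hab
  rw [interior_Icc] at hx
  rw [Real.deriv_arctan]
  exact one_div_le_one_div_of_le (by positivity) (by nlinarith [hx.1, hx.2])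

theorem sum_Ico_one_div_one_add_sq_div_le {K : ℝ} (hK : 0 < K) {m n : ℕ} (hm : 1 ≤ m) :
    ∑ j ∈ Finset.Ico m n, 1 / (1 + ((j : ℝ) / K) ^ 2) ≤ π / 2 * K := by
  obtain hnm | hmn := lt_or_ge n m
  · rw [Finset.Ico_eq_empty_of_le hnm.le, Finset.sum_empty]
    positivity
  set f : ℕ → ℝ := fun j => K * arctan (((j : ℝ) - 1) / K)
  have hstep : ∀ j ∈ Finset.Ico m n, 1 / (1 + ((j : ℝ) / K) ^ 2) ≤ f (j + 1) - f j := by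
    intro j hj
    have hj : (1 : ℝ) ≤ j := by exact_mod_cast hm.trans (Finset.mem_Ico.1 hj).1
    have h := one_div_one_add_sq_mul_sub_le_arctan_sub
      (div_nonneg (sub_nonneg.2 hj) hK.le)
      (div_le_div_of_nonneg_right (sub_le_self _ zero_le_one) hK.le)
    simp only [f, Nat.cast_succ, add_sub_cancel_right, ← mul_sub]
    calc 1 / (1 + ((j : ℝ) / K) ^ 2)
        = K * (1 / (1 + ((j : ℝ) / K) ^ 2) * ((j : ℝ) / K - ((j : ℝ) - 1) / K)) := by
          field_simp; ring
      _ ≤ _ := by gcongr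
  have hfn : f n ≤ π / 2 * K := by
    rw [mul_comm]
    exact mul_le_mul_of_nonneg_left (arctan_lt_pi_div_two _).le hK.le
  have hfm : 0 ≤ f m := by
    have : (1 : ℝ) ≤ m := by exact_mod_cast hm
    exact mul_nonneg hK.le (arctan_nonneg.2 (div_nonneg (by linarith) hK.le))
  calc _ ≤ ∑ j ∈ Finset.Ico m n, (f (j + 1) - f j) := Finset.sum_le_sum hstep
    _ = f n - f m := Finset.sum_Ico_sub f hmn
    _ ≤ π / 2 * K := by linarith

theorem abs_image_sub_le_of_abs_deriv_le {f f' : ℝ → ℝ} {a b C : ℝ}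
    (hf : ∀ x ∈ Icc a b, HasDerivAt f (f' x) x) (hC : ∀ x ∈ Icc a b, |f' x| ≤ C)
    {t : ℝ} (ht : t ∈ Icc a b) : |f t - f a| ≤ C * (t - a) :=
  norm_image_sub_le_of_norm_deriv_le_segment' (fun x hx => (hf x hx).hasDerivWithinAt)
    (fun x hx => hC x (Ico_subset_Icc_self hx)) t ht

theorem abs_trapezoid_error_le {F F' F'' F''' : ℝ → ℝ} {a b B : ℝ} (hab : a ≤ b)
    (hF : ∀ x ∈ Icc a b, HasDerivAt F (F' x) x)
    (hF' : ∀ x ∈ Icc a b, HasDerivAt F' (F'' x) x)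
    (hF'' : ∀ x ∈ Icc a b, HasDerivAt F'' (F''' x) x)
    (hB : ∀ x ∈ Icc a b, |F''' x| ≤ B) :
    |F b - F a - (b - a) / 2 * (F' a + F' b)| ≤ B * (b - a) ^ 3 / 2 := by
  have hB0 : 0 ≤ B := (abs_nonneg _).trans (hB a (left_mem_Icc.2 hab))
  -- `ψ` is the derivative of the trapezoid error `φ`, and `ψ' t = -(t - a) / 2 * F''' t`.
  set ψ : ℝ → ℝ := fun t => (F' t - F' a) / 2 - (t - a) / 2 * F'' t
  set φ : ℝ → ℝ := fun t => F t - F a - (t - a) / 2 * (F' a + F' t)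
  have hlin : ∀ t, HasDerivAt (fun t : ℝ => (t - a) / 2) (1 / 2) t := fun t => by
    simpa using ((hasDerivAt_id t).sub_const a).div_const 2
  have hψ : ∀ t ∈ Icc a b, |ψ t| ≤ (b - a) / 2 * B * (t - a) := by
    intro t ht
    have h := abs_image_sub_le_of_abs_deriv_le (f := ψ) (f' := fun x => -((x - a) / 2 * F''' x))
      (C := (b - a) / 2 * B)
      (fun x hx => ((((hF' x hx).sub_const (F' a)).div_const 2).sub
        ((hlin x).mul (hF'' x hx))).congr_deriv (by ring))
      (fun x hx => by
        rw [abs_neg, abs_mul, abs_of_nonneg (by linarith [hx.1])]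
        exact mul_le_mul (by linarith [hx.2]) (hB x hx) (abs_nonneg _) (by linarith))
      ht
    simpa [ψ] using h
  have hφ := abs_image_sub_le_of_abs_deriv_le (f := φ) (f' := ψ) (C := (b - a) / 2 * B * (b - a))
    (fun x hx => (((hF x hx).sub_const (F a)).sub
      ((hlin x).mul ((hF' x hx).const_add (F' a)))).congr_deriv (by simp only [ψ]; ring))
    (fun x hx => (hψ x hx).trans
      (mul_le_mul_of_nonneg_left (by linarith [hx.2]) (mul_nonneg (by linarith) hB0)))
    (right_mem_Icc.2 hab)
  simp only [φ, sub_self, zero_div, zero_mul, sub_zero] at hφ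
  calc _ ≤ (b - a) / 2 * B * (b - a) * (b - a) := hφ
    _ = B * (b - a) ^ 3 / 2 := by ring

theorem abs_euler_maclaurin_error_le {F F' F'' F''' : ℝ → ℝ} {K M : ℝ} (hK : 0 < K)
    {m n : ℕ} (hm : 1 ≤ m) (hmn : m ≤ n)
    (hF : ∀ x, 0 ≤ x → HasDerivAt F (F' x) x)
    (hF' : ∀ x, 0 ≤ x → HasDerivAt F' (F'' x) x)
    (hF'' : ∀ x, 0 ≤ x → HasDerivAt F'' (F''' x) x)
    (hM : ∀ x, 0 ≤ x → (1 + x ^ 2) * |F''' x| ≤ M) :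
    |∑ j ∈ Finset.Ico m n, F' (j / K) - 1 / 2 * (F' (m / K) - F' (n / K))
        - K * (F (n / K) - F (m / K))| ≤ π / 4 * M / K := by
  have hM0 : 0 ≤ M := (mul_nonneg (by positivity) (abs_nonneg _)).trans (hM 0 le_rfl)
  set x : ℕ → ℝ := fun j => j / K
  set e : ℕ → ℝ := fun j => F (x (j + 1)) - F (x j) - (1 / K) / 2 * (F' (x j) + F' (x (j + 1)))
  have hx : ∀ j, x (j + 1) - x j = 1 / K := fun j => by simp only [x]; push_cast; ring
  have he : ∀ j ∈ Finset.Ico m n, |e j| ≤ M / (1 + x j ^ 2) * (1 / K) ^ 3 / 2 := by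
    intro j hj
    have hxj : 0 ≤ x j := by positivity
    have hxx : x j ≤ x (j + 1) := by linarith [hx j, one_div_pos.2 hK]
    have h := abs_trapezoid_error_le hxx (fun y hy => hF y (hxj.trans hy.1))
      (fun y hy => hF' y (hxj.trans hy.1)) (fun y hy => hF'' y (hxj.trans hy.1))
      (B := M / (1 + x j ^ 2)) (fun y hy => by
        have hy0 := hxj.trans hy.1
        rw [le_div_iff₀ (by positivity), mul_comm]
        refine le_trans ?_ (hM y hy0)
        gcongr
        nlinarith [hy.1])
    rwa [hx] at h
  have hsum : ∑ j ∈ Finset.Ico m n, e j = (F (x n) - F (x m))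
      - 1 / K * ∑ j ∈ Finset.Ico m n, F' (x j) - 1 / (2 * K) * (F' (x n) - F' (x m)) := by
    rw [← Finset.sum_Ico_sub (fun j => F (x j)) hmn, ← Finset.sum_Ico_sub (fun j => F' (x j)) hmn,
      Finset.mul_sum, Finset.mul_sum, ← Finset.sum_sub_distrib, ← Finset.sum_sub_distrib]
    refine Finset.sum_congr rfl fun j _ => ?_
    simp only [e]
    ring
  have hid : ∑ j ∈ Finset.Ico m n, F' (j / K) - 1 / 2 * (F' (m / K) - F' (n / K))
      - K * (F (n / K) - F (m / K)) = -(K * ∑ j ∈ Finset.Ico m n, e j) := by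
    rw [hsum]
    field_simp
    ring
  rw [hid, abs_neg, abs_mul, abs_of_pos hK]
  calc K * |∑ j ∈ Finset.Ico m n, e j|
      ≤ K * ∑ j ∈ Finset.Ico m n, M / (1 + x j ^ 2) * (1 / K) ^ 3 / 2 := by
        gcongr
        exact (Finset.abs_sum_le_sum_abs _ _).trans (Finset.sum_le_sum he)
    _ = M / (2 * K ^ 2) * ∑ j ∈ Finset.Ico m n, 1 / (1 + ((j : ℝ) / K) ^ 2) := by
        rw [Finset.mul_sum, Finset.mul_sum]
        refine Finset.sum_congr rfl fun j _ => ?_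
        simp only [x]
        field_simp
    _ ≤ M / (2 * K ^ 2) * (π / 2 * K) := by
        gcongr
        exact sum_Ico_one_div_one_add_sq_div_le hK hm
    _ = π / 4 * M / K := by
        field_simp
        ring

namespace SA

variable {lam mu : ℝ → ℝ} {xs : ℝ}

theorem continuousOn_log_div (hSA : SA lam mu xs) :
    ContinuousOn (fun s => log (mu s / lam s)) (Ici 0) :=
  (hSA.mu_diff.continuousOn.div hSA.lam_diff.continuousOn fun y hy =>
    (hSA.lam_pos y hy).ne').log fun y hy => (div_pos (hSA.mu_pos y hy) (hSA.lam_pos y hy)).ne'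

theorem deriv_Hfun (hSA : SA lam mu xs) {x : ℝ} (hx : 0 < x) :
    deriv (Hfun lam mu xs) x = log (mu x / lam x) := by
  have hcont := hSA.continuousOn_log_div
  have hsub : uIcc xs x ⊆ Ici 0 := fun y hy => (le_min hSA.xs_pos.le hx.le).trans hy.1
  exact (intervalIntegral.integral_hasDerivAt_right ((hcont.mono hsub).intervalIntegrable)
    ((hcont.mono Ioi_subset_Ici_self).stronglyMeasurableAtFilter isOpen_Ioi x hx)
    (hcont.continuousAt (Ici_mem_nhds hx))).deriv

theorem log_prod_muK_div_lamK (hSA : SA lam mu xs) {K : ℝ} (hK : 0 < K) {m n : ℕ}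
    (hm : 1 ≤ m) :
    log (∏ j ∈ Finset.Ico m n, muK mu K j / lamK lam K j)
      = ∑ j ∈ Finset.Ico m n, deriv (Hfun lam mu xs) (j / K) := by
  have hpos : ∀ j ∈ Finset.Ico m n, (0 : ℝ) < j := fun j hj => by
    exact_mod_cast hm.trans (Finset.mem_Ico.1 hj).1
  have hratio : ∀ j ∈ Finset.Ico m n, muK mu K j / lamK lam K j = mu (j / K) / lam (j / K) :=
    fun j hj => mul_div_mul_left _ _ (hpos j hj).ne'
  rw [log_prod fun j hj => by
    rw [hratio j hj]
    exact (div_pos (hSA.mu_pos _ (by positivity)) (hSA.lam_pos _ (by positivity))).ne']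
  refine Finset.sum_congr rfl fun j hj => ?_
  rw [hratio j hj, hSA.deriv_Hfun (div_pos (hpos j hj) hK)]

theorem log_mu_mul_lam_div_lam_mul_mu (hSA : SA lam mu xs) {x y : ℝ} (hx : 0 < x)
    (hy : 0 < y) :
    log (mu x * lam y / (lam x * mu y))
      = deriv (Hfun lam mu xs) x - deriv (Hfun lam mu xs) y := by
  have hlx := (hSA.lam_pos x hx.le).ne'
  have hly := (hSA.lam_pos y hy.le).ne'
  have hmx := (hSA.mu_pos x hx.le).ne'
  have hmy := (hSA.mu_pos y hy.le).ne'
  rw [hSA.deriv_Hfun hx, hSA.deriv_Hfun hy, log_div (mul_ne_zero hmx hly) (mul_ne_zero hlx hmy),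
    log_mul hmx hly, log_mul hlx hmy, log_div hmx hlx, log_div hmy hly]
  ring

end SA

/-- Laplace-type estimate for `Λ_{n,m} = ∏_{j=m}^{n-1} μ_j/λ_j`. -/
theorem stmt_17 (lam mu : ℝ → ℝ) (xs : ℝ) (hSA : SA lam mu xs) :
    ∃ C : ℝ, 0 < C ∧ ∀ K : ℝ, 1 < K → ∀ m n : ℕ, 1 ≤ m → m < n →
      |Real.log (∏ j ∈ Finset.Ico m n, muK mu K j / lamK lam K j)
          - (1 / 2) * Real.log ((mu ((m : ℝ) / K) * lam ((n : ℝ) / K))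
              / (lam ((m : ℝ) / K) * mu ((n : ℝ) / K)))
          - K * (Hfun lam mu xs ((n : ℝ) / K) - Hfun lam mu xs ((m : ℝ) / K))|
        ≤ C / K := by
  obtain ⟨M, hM⟩ := hSA.H3_bdd
  have hM0 : 0 ≤ M := (mul_nonneg (by positivity) (abs_nonneg _)).trans (hM 0 le_rfl)
  refine ⟨M + 1, by positivity, fun K hK m n hm hmn => ?_⟩
  have hK0 : 0 < K := one_pos.trans hK
  have hpos : ∀ j : ℕ, 1 ≤ j → (0 : ℝ) < j / K := fun j hj =>
    div_pos (by exact_mod_cast hj) hK0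
  rw [hSA.log_prod_muK_div_lamK hK0 hm,
    hSA.log_mu_mul_lam_div_lam_mul_mu (hpos m hm) (hpos n (hm.trans hmn.le))]
  calc _ ≤ π / 4 * M / K := abs_euler_maclaurin_error_le hK0 hm hmn.le
        (fun x hx => (hSA.H_d1 x hx).hasDerivAt) (fun x hx => (hSA.H_d2 x hx).hasDerivAt)
        (fun x hx => (hSA.H_d3 x hx).hasDerivAt) hM
    _ ≤ (M + 1) / K := by
        gcongr
        nlinarith [pi_le_four]
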